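/- arXiv:2306.03232 — 2 statements merged into one kernel-verified Lean document; each statement's English description precedes it below -/
import Mathlib

section
/- Given a finite set X of positive integers x₁,…,xₙ and a subset Y ⊆ [n] with signs εⱼ = 1 if j ∉ Y and εⱼ = −1 if j ∈ Y, the integer y = Σ_{j∈Y} xⱼ satisfies: y = k for some target k ∉ {0,1} ∪ X if and only if k is a subset sum of X not equal to any single element or 0 or 1. In particular, determining whether some sequence of mutations of the star-shaped quiver produces an arrow of multiplicity k reduces to Subset Sum. -/
/-- Quiver mutation at vertex `k`, on the skew-symmetric exchange-matrix
encoding. -/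
def mutate {V : Type*} [DecidableEq V] (B : Matrix V V ℤ) (k : V) : Matrix V V ℤ :=
  Matrix.of fun i j =>
    if i = k ∨ j = k then -B i j
    else B i j + (|B i k| * B k j + B i k * |B k j|) / 2

/-- The star-shaped quiver of the Subset Sum reduction: frozen vertices
`A = Sum.inr false` and `B = Sum.inr true`, mutable vertices `Cⱼ = Sum.inl j`,
with `x j` arrows `Cⱼ → A` and one arrow `B → Cⱼ`. -/
def starQuiver {n : ℕ} (x : Fin n → ℕ) : Matrix (Fin n ⊕ Bool) (Fin n ⊕ Bool) ℤ :=
  Matrix.of fun i j =>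
    match i, j with
    | Sum.inl a, Sum.inr false => (x a : ℤ)
    | Sum.inr false, Sum.inl a => -(x a : ℤ)
    | Sum.inr true, Sum.inl _ => 1
    | Sum.inl _, Sum.inr true => -1
    | _, _ => 0

def sg {n : ℕ} (Y : Finset (Fin n)) (a : Fin n) : ℤ := if a ∈ Y then -1 else 1

def fullM {n : ℕ} (x : Fin n → ℕ) (Y : Finset (Fin n)) :
    Matrix (Fin n ⊕ Bool) (Fin n ⊕ Bool) ℤ :=
  Matrix.of fun i j =>
    match i, j with
    | Sum.inl a, Sum.inr false => sg Y a * (x a : ℤ)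
    | Sum.inr false, Sum.inl a => -(sg Y a * (x a : ℤ))
    | Sum.inr true, Sum.inl a => sg Y a
    | Sum.inl a, Sum.inr true => -sg Y a
    | Sum.inr true, Sum.inr false => ∑ j ∈ Y, (x j : ℤ)
    | Sum.inr false, Sum.inr true => -∑ j ∈ Y, (x j : ℤ)
    | _, _ => 0

lemma fullM_empty {n : ℕ} (x : Fin n → ℕ) : fullM x ∅ = starQuiver x := by
  ext i j
  rcases i with a | (_ | _) <;> rcases j with c | (_ | _) <;>
    simp [fullM, starQuiver, sg]

lemma abs_sg {n : ℕ} (Y : Finset (Fin n)) (a : Fin n) : |sg Y a| = 1 := by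
  unfold sg; split <;> simp

lemma sg_mul_self {n : ℕ} (Y : Finset (Fin n)) (a : Fin n) : sg Y a * sg Y a = 1 := by
  unfold sg; split <;> simp

lemma mutate_fullM {n : ℕ} (x : Fin n → ℕ) (Y : Finset (Fin n)) (k : Fin n) :
    mutate (fullM x Y) (Sum.inl k) = fullM x (symmDiff Y {k}) := by
  have hmem : ∀ a, a ∈ symmDiff Y {k} ↔ ((a ∈ Y ∧ a ≠ k) ∨ (a ∉ Y ∧ a = k)) := by
    intro a
    simp [Finset.mem_symmDiff]
    tauto
  have hsg : ∀ a, a ≠ k → sg (symmDiff Y {k}) a = sg Y a := by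
    intro a ha
    unfold sg
    by_cases h : a ∈ Y <;>
      simp [hmem, h, ha]
  have hsgk : sg (symmDiff Y {k}) k = -sg Y k := by
    unfold sg
    by_cases h : k ∈ Y <;> simp [hmem, h]
  have hsum : ∑ j ∈ symmDiff Y {k}, (x j : ℤ) = (∑ j ∈ Y, (x j : ℤ)) + sg Y k * x k := by
    by_cases h : k ∈ Y
    · have : symmDiff Y {k} = Y.erase k := by
        ext a; simp only [hmem, Finset.mem_erase]
        constructor
        · rintro (⟨h1, h2⟩ | ⟨h1, rfl⟩)
          · exact ⟨h2, h1⟩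
          · exact absurd h h1
        · rintro ⟨h1, h2⟩; exact Or.inl ⟨h2, h1⟩
      rw [this, sg, if_pos h]
      have := Finset.add_sum_erase Y (fun j => (x j : ℤ)) h
      linarith
    · have : symmDiff Y {k} = insert k Y := by
        ext a; simp only [hmem, Finset.mem_insert]
        constructor
        · rintro (⟨h1, _⟩ | ⟨_, rfl⟩)
          · exact Or.inr h1
          · exact Or.inl rfl
        · rintro (rfl | h1)
          · exact Or.inr ⟨h, rfl⟩
          · exact Or.inl ⟨h1, fun e => h (e ▸ h1)⟩
      rw [this, sg, if_neg h, Finset.sum_insert h]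
      ring
  ext i j
  rcases i with a | b <;> rcases j with c | d
  · -- inl a, inl c
    by_cases h1 : a = k <;> by_cases h2 : c = k <;>
      simp [mutate, fullM, h1, h2]
  · -- inl a, inr d
    by_cases h1 : a = k
    · subst h1
      cases d <;> simp [mutate, fullM, hsgk]
    · cases d <;> simp [mutate, fullM, h1, hsg a h1]
  · -- inr b, inl c
    by_cases h2 : c = k
    · subst h2
      cases b <;> simp [mutate, fullM, hsgk]
    · cases b <;> simp [mutate, fullM, h2, hsg c h2]
  · -- inr b, inr d
    cases b <;> cases d <;>
      simp only [mutate, fullM, Matrix.of_apply, reduceCtorEq, or_self, if_false, hsum]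
    all_goals
      simp only [sg]
      split <;>
        simp only [abs_mul, abs_neg, abs_one, Nat.abs_cast, one_mul, mul_one,
          neg_mul, mul_neg, one_mul, neg_neg, abs_abs] <;>
        omega

/-- for any composition of mutations at the vertices `Cⱼ` of the
star quiver, the multiplicity of the arrow between `B` and `A` equals
`Σ_{j ∈ Y} x j`, where `Y` is the set of indices mutated an odd number of
times.  Hence some mutation of the quiver has an arrow of multiplicity `k`
between `B` and `A` iff `k` is a subset sum of `{x j}`. -/
theorem stmt_6 {n : ℕ} (x : Fin n → ℕ) (hx : ∀ j, 0 < x j)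
    (L : List (Fin n)) :
    (L.foldl (fun M j => mutate M (Sum.inl j)) (starQuiver x))
        (Sum.inr true) (Sum.inr false) =
      ∑ j ∈ Finset.univ.filter (fun j => Odd (L.count j)), (x j : ℤ) := by
  suffices h : ∀ L : List (Fin n),
      L.foldl (fun M j => mutate M (Sum.inl j)) (starQuiver x) =
        fullM x (Finset.univ.filter fun j => Odd (L.count j)) by
    rw [h L]
    rfl
  intro L
  induction L using List.reverseRecOn with
  | nil =>
    simp only [List.foldl_nil, List.count_nil]
    rw [← fullM_empty x]
    congr 1
    ext j
    simp [Nat.odd_iff]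
  | append_singleton L k ih =>
    have hY : (Finset.univ.filter fun j => Odd ((L ++ [k]).count j)) =
        symmDiff (Finset.univ.filter fun j => Odd (L.count j)) {k} := by
      ext j
      simp only [Finset.mem_symmDiff, Finset.mem_filter, Finset.mem_univ, true_and,
        Finset.mem_singleton, List.count_append]
      by_cases hj : j = k
      · subst hj
        simp [Nat.odd_add_one]
      · simp [List.count_singleton, hj, Ne.symm hj]
    rw [List.foldl_append, List.foldl_cons, List.foldl_nil, ih, mutate_fullM, hY]
end

section
/- If vertices j and k of a quiver are nonadjacent (no arrows between them), then mutations at j and k commute: μ_j(μ_k(Q)) = μ_k(μ_j(Q)). -/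
/-- if vertices `j` and `k` are nonadjacent (`B j k = 0`), then
mutations at `j` and `k` commute. -/
theorem stmt_11 {V : Type*} [DecidableEq V] (B : Matrix V V ℤ)
    (hskew : ∀ i j, B j i = -B i j) (j k : V) (hjk : B j k = 0) :
    mutate (mutate B k) j = mutate (mutate B j) k := by
  have hkj : B k j = 0 := by rw [hskew, hjk, neg_zero]
  by_cases hjkeq : j = k
  · subst hjkeq; rfl
  ext a b
  simp only [mutate, Matrix.of_apply]
  clear hskew
  by_cases haj : a = j <;> by_cases hbj : b = j <;>
    by_cases hak : a = k <;> by_cases hbk : b = k <;>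
    simp_all [abs_neg, Ne.symm hjkeq] <;> ring
end
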